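/- arXiv:1111.5635 — 7 statements merged into one kernel-verified Lean document; each statement's English description precedes it below -/
import Mathlib

section
/- If G is a group such that every proper normal subgroup of G has index strictly greater than ℵ₀, then G is perfect, i.e. equal to its commutator subgroup. -/
/-! The abelianization of a non-perfect group is a nonzero abelian group, and characters into
`ℚ/ℤ` separate its points; the kernel of a nontrivial character composed with the
abelianization map is a proper normal subgroup of countable index. -/

theorem AddCircle.countable_one_rat : Countable (AddCircle (1 : ℚ)) :=
  Quotient.countable

theorem MonoidHom.countable_quotient_ker {G H : Type*} [Group G] [Group H] [Countable H]
    (φ : G →* H) : Countable (G ⧸ φ.ker) :=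
  (QuotientGroup.quotientKerEquivRange φ).toEquiv.countable_iff.mpr Subtype.countable

theorem exists_normal_ne_top_countable_quotient_of_commutator_ne_top {G : Type*} [Group G]
    (hG : commutator G ≠ ⊤) : ∃ N : Subgroup G, N.Normal ∧ N ≠ ⊤ ∧ Countable (G ⧸ N) := by
  obtain ⟨g, hg⟩ : ∃ g : G, g ∉ commutator G := by
    simpa [Subgroup.eq_top_iff'] using hG
  have hg_ne : Additive.ofMul (Abelianization.of g) ≠ 0 := by
    rwa [← Abelianization.ker_of, MonoidHom.mem_ker] at hg
  obtain ⟨c, hc⟩ := CharacterModule.exists_character_apply_ne_zero_of_ne_zero hg_ne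
  let φ : G →* Multiplicative (AddCircle (1 : ℚ)) :=
    (AddMonoidHom.toMultiplicativeRight c).comp Abelianization.of
  have : Countable (Multiplicative (AddCircle (1 : ℚ))) := AddCircle.countable_one_rat
  refine ⟨φ.ker, φ.normal_ker, fun htop => hc ?_, φ.countable_quotient_ker⟩
  exact φ.mem_ker.mp (htop ▸ Subgroup.mem_top g)

/-- If every proper normal subgroup of `G` has index strictly greater than `ℵ₀`,
then `G` is perfect. -/
theorem stmt_2 {G : Type*} [Group G]
    (h : ∀ N : Subgroup G, N.Normal → N ≠ ⊤ → Cardinal.aleph0 < Cardinal.mk (G ⧸ N)) :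
    commutator G = ⊤ := by
  by_contra hG
  obtain ⟨N, hN, hN_ne, _⟩ := exists_normal_ne_top_countable_quotient_of_commutator_ne_top hG
  exact (h N hN hN_ne).not_ge Cardinal.mk_le_aleph0
end

section
/- Let V be a vector space over a division ring with basis B, and let D ⊆ B with the cardinality of D strictly less than the (infinite) dimension of V. Then for every linear automorphism σ of V there is a subset C of B with B \ C a moiety of B, and a linear automorphism ρ of V such that ρ fixes span(B \ C') pointwise for some moiety decomposition, ρ preserves a complementary span, and ρ agrees with σ on D. -/
/-!
The indices in `D` together with the supports of the vectors `σ (b d)`, `d ∈ D`, form a set `S`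
of fewer than `κ` indices, so there is a moiety `B₁` of the basis avoiding `S`. The complementary
span `W = span (b '' B₁ᶜ)` has dimension `κ` and contains both independent families `(b d)` and
`(σ (b d))`, indexed by `D`. Extending each family to a basis of `W` leaves `κ` new vectors in
both cases, so some automorphism `τ` of `W` carries one family to the other; `ρ` is `τ` on `W`
and the identity on `span (b '' B₁)`.
-/

open Set Submodule Cardinal Module

universe u v w

namespace Module.Basis

variable {K : Type u} {V : Type v} {ι : Type w} [DivisionRing K] [AddCommGroup V] [Module K V]

theorem sumExtend_apply_inl {v : ι → V} (hv : LinearIndependent K v) (i : ι) :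
    sumExtend hv (Sum.inl i) = v i := by
  simp only [sumExtend, reindex_apply, coe_extend]
  rfl

theorem mk_sumExtendIndex {v : ι → V} (hv : LinearIndependent K v)
    (hrank : ℵ₀ ≤ Module.rank K V) (hι : lift.{v} #ι < lift.{w} (Module.rank K V)) :
    #(sumExtendIndex hv) = Module.rank K V := by
  have h := (sumExtend hv).mk_eq_rank
  rw [mk_sum, lift_add, lift_lift, lift_lift, lift_umax.{v, w}] at h
  exact lift_inj.1 (eq_of_add_eq_of_aleph0_le h hι (aleph0_le_lift.2 hrank))

end Module.Basis

variable {K : Type u} {V : Type v} [DivisionRing K] [AddCommGroup V] [Module K V]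

theorem exists_linearEquiv_apply_eq_of_linearIndependent {ι : Type w} {u v : ι → V}
    (hu : LinearIndependent K u) (hv : LinearIndependent K v)
    (hrank : ℵ₀ ≤ Module.rank K V) (hι : lift.{v} #ι < lift.{w} (Module.rank K V)) :
    ∃ τ : V ≃ₗ[K] V, ∀ i, τ (u i) = v i := by
  obtain ⟨f⟩ : Nonempty (Basis.sumExtendIndex hu ≃ Basis.sumExtendIndex hv) := Cardinal.eq.1 <| by
    rw [Basis.mk_sumExtendIndex hu hrank hι, Basis.mk_sumExtendIndex hv hrank hι]
  refine ⟨(Basis.sumExtend hu).equiv (Basis.sumExtend hv) ((Equiv.refl ι).sumCongr f), fun i => ?_⟩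
  rw [← Basis.sumExtend_apply_inl hu, Basis.equiv_apply, Equiv.sumCongr_apply, Sum.map_inl,
    Equiv.refl_apply, Basis.sumExtend_apply_inl]

theorem Submodule.exists_linearEquiv_extend_of_isCompl {p q : Submodule K V} (h : IsCompl p q)
    (τ : q ≃ₗ[K] q) :
    ∃ ρ : V ≃ₗ[K] V, (∀ x ∈ p, ρ x = x) ∧ q.map (ρ : V →ₗ[K] V) = q ∧ ∀ y : q, ρ y = τ y := by
  let e := prodEquivOfIsCompl p q h
  let ρ := e.symm.trans (((LinearEquiv.refl K p).prodCongr τ).trans e)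
  have hρ : ∀ y : q, ρ y = τ y := fun y => by simp [ρ, e]
  refine ⟨ρ, fun x hx => ?_, ?_, hρ⟩
  · simp [ρ, e, prodEquivOfIsCompl_symm_apply_left p q h ⟨x, hx⟩]
  · refine le_antisymm ?_ fun y hy => ⟨τ.symm ⟨y, hy⟩, (τ.symm ⟨y, hy⟩).2, ?_⟩
    · rintro _ ⟨y, hy, rfl⟩
      simp [hρ ⟨y, hy⟩]
    · simp [hρ]

theorem Cardinal.exists_mk_eq_mk_compl (α : Type*) [Infinite α] :
    ∃ A : Set α, #A = #α ∧ #↥Aᶜ = #α := by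
  obtain ⟨e⟩ : Nonempty (α ≃ α ⊕ α) := Cardinal.eq.1 (add_eq_self (aleph0_le_mk α)).symm
  refine ⟨e ⁻¹' range Sum.inl, ?_, ?_⟩
  · rw [mk_preimage_equiv, mk_range_eq _ Sum.inl_injective]
  · rw [← preimage_compl, compl_range_inl, mk_preimage_equiv, mk_range_eq _ Sum.inr_injective]

theorem Cardinal.exists_subset_compl_and_mk_eq_mk_compl {α : Type*} (hα : ℵ₀ ≤ #α) {S : Set α}
    (hS : #S < #α) : ∃ B : Set α, S ⊆ Bᶜ ∧ #B = #α ∧ #↥Bᶜ = #α := by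
  have : Infinite α := infinite_iff.2 hα
  have hSc : #↥Sᶜ = #α := mk_compl_of_infinite S hS
  have : Infinite ↥Sᶜ := infinite_iff.2 (hSc ▸ hα)
  obtain ⟨A, hA, hAc⟩ := exists_mk_eq_mk_compl ↥Sᶜ
  refine ⟨(↑) '' A, ?_, ?_, le_antisymm (mk_set_le _) ?_⟩
  · rintro x hx ⟨y, -, rfl⟩
    exact y.2 hx
  · rw [mk_image_eq Subtype.val_injective, hA, hSc]
  · calc #α = #(((↑) : ↥Sᶜ → α) '' Aᶜ) := by rw [mk_image_eq Subtype.val_injective, hAc, hSc]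
      _ ≤ #↥((↑) '' A)ᶜ := mk_le_mk_of_subset <| by
        rintro _ ⟨y, hy, rfl⟩ ⟨z, hz, hzy⟩
        exact hy (Subtype.val_injective hzy ▸ hz)

theorem Cardinal.mk_biUnion_lt_of_finite {α β : Type u} (hα : ℵ₀ ≤ #α) {D : Set β}
    (hD : #D < #α) {f : β → Set α} (hf : ∀ d ∈ D, (f d).Finite) : #(⋃ d ∈ D, f d) < #α := by
  rcases lt_or_ge #D ℵ₀ with hfin | hinf
  · exact ((lt_aleph0_iff_set_finite.1 hfin).biUnion hf).lt_aleph0.trans_le hα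
  · calc #(⋃ d ∈ D, f d) ≤ #D * ⨆ d : D, #(f d) := mk_biUnion_le f D
      _ ≤ #D * ℵ₀ := mul_le_mul_right (ciSup_le' fun d : D => (hf d d.2).lt_aleph0.le) _
      _ = #D := mul_aleph0_eq hinf
      _ < #α := hD

/-- For a vector space `V` over a division ring with basis `b` indexed by an infinite set `ι`,
and `D ⊆ ι` of cardinality `< |ι|`, every automorphism `σ` of `V` agrees on `D` with some
`B`-moietous automorphism `ρ` (one fixing pointwise one half `B₁` of a moiety partition of the
basis and preserving the span of the other half). -/
theorem stmt_5 {K V ι : Type*} [DivisionRing K] [AddCommGroup V] [Module K V]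
    (b : Module.Basis ι K V) (hinf : Cardinal.aleph0 ≤ Cardinal.mk ι)
    (D : Set ι) (hD : Cardinal.mk D < Cardinal.mk ι) (σ : V ≃ₗ[K] V) :
    ∃ (B₁ : Set ι) (ρ : V ≃ₗ[K] V),
      Cardinal.mk B₁ = Cardinal.mk ↥(B₁ᶜ) ∧
      (∀ i ∈ B₁, ρ (b i) = b i) ∧
      (Submodule.span K (b '' B₁ᶜ)).map (ρ : V →ₗ[K] V) = Submodule.span K (b '' B₁ᶜ) ∧
      ∀ i ∈ D, ρ (b i) = σ (b i) := by
  let S := D ∪ ⋃ d ∈ D, ↑(b.repr (σ (b d))).support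
  have hS : #S < #ι := (mk_union_le _ _).trans_lt <| add_lt_of_lt hinf hD <|
    mk_biUnion_lt_of_finite hinf hD fun _ _ => Finset.finite_toSet _
  obtain ⟨B₁, hSB, hB₁, hB₂⟩ := exists_subset_compl_and_mk_eq_mk_compl hinf hS
  let W := span K (b '' B₁ᶜ)
  have hbW : ∀ d : D, b d ∈ W := fun d => subset_span ⟨d, hSB (Or.inl d.2), rfl⟩
  have hσbW : ∀ d : D, σ (b d) ∈ W := fun d => span_mono (image_mono fun i hi =>
    hSB (Or.inr (mem_biUnion d.2 hi))) (b.mem_span_repr_support _)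
  have hrankW : Module.rank K W = #(b '' B₁ᶜ) :=
    rank_span_set (b.linearIndependent.linearIndepOn _).id_image
  obtain ⟨τ, hτ⟩ := exists_linearEquiv_apply_eq_of_linearIndependent
    (u := fun d : D => (⟨b d, hbW d⟩ : W)) (v := fun d : D => ⟨σ (b d), hσbW d⟩)
    (.of_comp W.subtype (b.linearIndependent.comp _ Subtype.val_injective))
    (.of_comp W.subtype ((b.linearIndependent.comp _ Subtype.val_injective).map' _ σ.ker))
    (by rw [hrankW, ← aleph0_le_lift, mk_image_eq_lift _ _ b.injective, hB₂, aleph0_le_lift]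
        exact hinf)
    (by rw [hrankW, mk_image_eq_lift _ _ b.injective, hB₂, lift_lt]; exact hD)
  obtain ⟨ρ, hρfix, hρW, hρτ⟩ := exists_linearEquiv_extend_of_isCompl
    (b.linearIndependent.isCompl_span_image b.span_eq isCompl_compl) τ
  refine ⟨B₁, ρ, hB₁.trans hB₂.symm, fun i hi => hρfix _ (subset_span ⟨i, hi, rfl⟩), hρW,
    fun d hd => ?_⟩
  simpa [hτ ⟨d, hd⟩] using hρτ ⟨b d, hbW ⟨d, hd⟩⟩
end

section
/- Let F be a free abelian group with basis B = {e_i : i ∈ I}, I infinite, and let D be a subset of B disjoint from {e_i}. Suppose u_i ∈ ⟨D⟩ for each i ∈ I. Then the endomorphism of F = ⟨D⟩ ⊕ ⟨e_i : i ∈ I⟩ fixing D pointwise and sending e_i to e_i + u_i is an automorphism, and it is a product of two automorphisms each fixing pointwise a moiety of {e_i : i ∈ I} together with D. -/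
/-!
Write `F = ⟨D⟩ ⊕ ⟨e_i⟩` and let `N_c` be the endomorphism killing `D` and sending `e_i ↦ c_i`.
When every `c_i` lies in `⟨D⟩`, the image of `N_c` lies in `⟨D⟩ ⊆ ker N_{c'}`, so
`N_{c'} N_c = 0`. Hence `1 + N_c` is an automorphism with inverse `1 - N_c`, and
`(1 + N_{c₁}) (1 + N_{c₂}) = 1 + N_{c₁ + c₂}`. Splitting `u` along `I = I₁ ⊔ I₁ᶜ` as
`u = 1_{I₁} u + 1_{I₁ᶜ} u` gives the factorisation.
-/

open Submodule

namespace Module.Basis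

variable {R M κ ι : Type*} [CommRing R] [AddCommGroup M] [Module R M]
  (b : Basis (κ ⊕ ι) R M)

noncomputable def shearNil (c : ι → M) : Module.End R M :=
  b.constr R (Sum.elim 0 c)

@[simp]
theorem shearNil_apply_inl (c : ι → M) (k : κ) : b.shearNil c (b (Sum.inl k)) = 0 :=
  b.constr_basis R _ _

@[simp]
theorem shearNil_apply_inr (c : ι → M) (i : ι) : b.shearNil c (b (Sum.inr i)) = c i :=
  b.constr_basis R _ _

theorem shearNil_add (c c' : ι → M) : b.shearNil (c + c') = b.shearNil c + b.shearNil c' :=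
  b.ext fun j => by cases j <;> simp

theorem span_inl_le_ker_shearNil (c : ι → M) :
    span R (Set.range fun k => b (Sum.inl k)) ≤ LinearMap.ker (b.shearNil c) :=
  span_le.mpr <| by rintro _ ⟨k, rfl⟩; simp

theorem shearNil_mul_shearNil (c : ι → M) {c' : ι → M}
    (hc' : ∀ i, c' i ∈ span R (Set.range fun k => b (Sum.inl k))) :
    b.shearNil c * b.shearNil c' = 0 :=
  b.ext fun j => by
    cases j with
    | inl k => simp
    | inr i => simpa using span_inl_le_ker_shearNil b c (hc' i)

variable {b}

theorem one_add_shearNil_mul_one_sub {c : ι → M}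
    (hc : ∀ i, c i ∈ span R (Set.range fun k => b (Sum.inl k))) :
    (1 + b.shearNil c) * (1 - b.shearNil c) = 1 := by
  rw [add_mul, mul_sub, mul_sub, shearNil_mul_shearNil b c hc]
  simp only [mul_one, one_mul, sub_zero, sub_add_cancel]

theorem one_sub_shearNil_mul_one_add {c : ι → M}
    (hc : ∀ i, c i ∈ span R (Set.range fun k => b (Sum.inl k))) :
    (1 - b.shearNil c) * (1 + b.shearNil c) = 1 := by
  rw [sub_mul, mul_add, mul_add, shearNil_mul_shearNil b c hc]
  simp only [mul_one, one_mul, add_zero, add_sub_cancel_right]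

noncomputable def shear (c : ι → M)
    (hc : ∀ i, c i ∈ span R (Set.range fun k => b (Sum.inl k))) : M ≃ₗ[R] M :=
  .ofLinearMap (1 + b.shearNil c) (1 - b.shearNil c)
    (one_add_shearNil_mul_one_sub hc) (one_sub_shearNil_mul_one_add hc)

variable {c : ι → M} (hc : ∀ i, c i ∈ span R (Set.range fun k => b (Sum.inl k)))

theorem shear_apply (x : M) : shear c hc x = x + b.shearNil c x := rfl

@[simp]
theorem shear_apply_inl (k : κ) : shear c hc (b (Sum.inl k)) = b (Sum.inl k) := by
  simp [shear_apply]

@[simp]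
theorem shear_apply_inr (i : ι) : shear c hc (b (Sum.inr i)) = b (Sum.inr i) + c i := by
  simp [shear_apply]

theorem shear_shear {c' : ι → M} (hc' : ∀ i, c' i ∈ span R (Set.range fun k => b (Sum.inl k)))
    (x : M) : shear c hc (shear c' hc' x) = shear (c + c') (fun i => add_mem (hc i) (hc' i)) x := by
  have h := shearNil_mul_shearNil b c hc'
  simp only [shear_apply, map_add, shearNil_add, LinearMap.add_apply, ← Module.End.mul_apply, h,
    LinearMap.zero_apply]
  abel

end Module.Basis

open Module.Basis

theorem Set.indicator_apply_mem {α M S : Type*} [Zero M] [SetLike S M] [ZeroMemClass S M]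
    {p : S} {f : α → M} (hf : ∀ a, f a ∈ p) (t : Set α) (a : α) : t.indicator f a ∈ p := by
  by_cases ha : a ∈ t <;> simp [ha, hf a]

theorem stmt_7_general {F D I : Type*} [AddCommGroup F]
    (b : Module.Basis (D ⊕ I) ℤ F) (u : I → F)
    (hu : ∀ i, u i ∈ AddSubgroup.closure (Set.range fun d : D => b (Sum.inl d)))
    (I₁ : Set I) :
    ∃ π₁ π₂ : AddAut F,
      (∀ d : D, π₁ (b (Sum.inl d)) = b (Sum.inl d)) ∧
      (∀ d : D, π₂ (b (Sum.inl d)) = b (Sum.inl d)) ∧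
      (∀ i ∈ I₁, π₁ (b (Sum.inr i)) = b (Sum.inr i) + u i) ∧
      (∀ i ∉ I₁, π₁ (b (Sum.inr i)) = b (Sum.inr i)) ∧
      (∀ i ∈ I₁, π₂ (b (Sum.inr i)) = b (Sum.inr i)) ∧
      (∀ i ∉ I₁, π₂ (b (Sum.inr i)) = b (Sum.inr i) + u i) ∧
      (∀ d : D, (π₁ + π₂) (b (Sum.inl d)) = b (Sum.inl d)) ∧
      (∀ i : I, (π₁ + π₂) (b (Sum.inr i)) = b (Sum.inr i) + u i) := by
  have hu' : ∀ i, u i ∈ span ℤ (Set.range fun d : D => b (Sum.inl d)) := fun i => by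
    rw [← mem_toAddSubgroup, span_int_eq_addSubgroupClosure]
    exact hu i
  have h₁ := Set.indicator_apply_mem hu' I₁
  have h₂ := Set.indicator_apply_mem hu' I₁ᶜ
  refine ⟨(shear _ h₁).toAddEquiv, (shear _ h₂).toAddEquiv, by simp, by simp,
    fun i hi => by simp [hi], fun i hi => by simp [hi], fun i hi => by simp [hi],
    fun i hi => by simp [hi], fun d => ?_, fun i => ?_⟩ <;>
  · -- the group law of `AddAut F` is written additively: `π₁ + π₂` is `π₁ ∘ π₂`
    rw [AddAut.add_apply]
    change shear _ h₁ (shear _ h₂ _) = _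
    rw [shear_shear]
    simp [Set.indicator_self_add_compl]

/-- Free abelian group with basis indexed by `D ⊕ I`, `I` infinite; `u i` lies in the
subgroup generated by the `D`-part. The map fixing `D` pointwise and sending `e_i ↦ e_i + u_i`
is an automorphism, and it is a product `π₁ * π₂` of two automorphisms, each fixing pointwise
`D` together with one half of a moiety partition `I = I₁ ⊔ I₁ᶜ`. -/
theorem stmt_7 {F D I : Type*} [AddCommGroup F] [Infinite I]
    (b : Module.Basis (D ⊕ I) ℤ F) (u : I → F)
    (hu : ∀ i, u i ∈ AddSubgroup.closure (Set.range fun d : D => b (Sum.inl d)))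
    (I₁ : Set I) (hI₁ : Cardinal.mk I₁ = Cardinal.mk ↥(I₁ᶜ)) :
    ∃ π₁ π₂ : AddAut F,
      (∀ d : D, π₁ (b (Sum.inl d)) = b (Sum.inl d)) ∧
      (∀ d : D, π₂ (b (Sum.inl d)) = b (Sum.inl d)) ∧
      (∀ i ∈ I₁, π₁ (b (Sum.inr i)) = b (Sum.inr i) + u i) ∧
      (∀ i ∉ I₁, π₁ (b (Sum.inr i)) = b (Sum.inr i)) ∧
      (∀ i ∈ I₁, π₂ (b (Sum.inr i)) = b (Sum.inr i)) ∧
      (∀ i ∉ I₁, π₂ (b (Sum.inr i)) = b (Sum.inr i) + u i) ∧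
      (∀ d : D, (π₁ + π₂) (b (Sum.inl d)) = b (Sum.inl d)) ∧
      (∀ i : I, (π₁ + π₂) (b (Sum.inr i)) = b (Sum.inr i) + u i) :=
  stmt_7_general b u hu I₁
end

section
/- Let F be a free group with basis B, c ≥ 2, and N = F/γ_c(F). For any family {c_b : b ∈ B} of elements of γ_2(N), the endomorphism of N determined by sending (the image of) b to b·c_b for each b ∈ B is an automorphism of N. -/
/-!
Since `N` is relatively free, `b ↦ b c_b` extends to an endomorphism `φ` of `N`, and `φ` is the
identity modulo `γ₂(N)`. The three subgroups lemma gives `[γ_k, γ₂] ≤ γ_{k+2}`, so by induction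
`φ` induces the identity on every factor `γ_k/γ_{k+1}`. As `γ_c(N) = 1`, this makes `φ` injective,
and surjective by successive approximation modulo `γ₂, γ₃, …`. In Lean, `γ_{k+1}` is
`(⊤ : Subgroup G).lowerCentralSeries k`.
-/

open Subgroup QuotientGroup
open scoped commutatorElement

section

variable {G H : Type*} [Group G] [Group H]

theorem Subgroup.lowerCentralSeries_eq_bot_of_ker_eq {n : ℕ} {π : G →* H}
    (hπ : Function.Surjective π) (hker : π.ker = (⊤ : Subgroup G).lowerCentralSeries n) :
    (⊤ : Subgroup H).lowerCentralSeries n = ⊥ := by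
  rw [← map_top_of_surjective π hπ, ← map_lowerCentralSeries, ← hker, Subgroup.map_eq_bot_iff]

theorem Subgroup.lowerCentralSeries_le_ker {n : ℕ} (f : G →* H)
    (hn : (⊤ : Subgroup H).lowerCentralSeries n = ⊥) :
    (⊤ : Subgroup G).lowerCentralSeries n ≤ f.ker := by
  rw [← MonoidHom.comap_bot, ← map_le_iff_le_comap, ← hn, map_lowerCentralSeries]
  exact lowerCentralSeries_mono _ le_top

theorem Subgroup.commutator_commutator_le_of_rotate {A B C K : Subgroup G} [K.Normal]
    (h1 : ⁅⁅B, C⁆, A⁆ ≤ K) (h2 : ⁅⁅C, A⁆, B⁆ ≤ K) : ⁅⁅A, B⁆, C⁆ ≤ K := by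
  have iff_map_eq_bot : ∀ X Y Z : Subgroup G,
      ⁅⁅X, Y⁆, Z⁆ ≤ K ↔ ⁅⁅X.map (mk' K), Y.map (mk' K)⁆, Z.map (mk' K)⁆ = ⊥ := by
    intro X Y Z
    rw [← map_commutator, ← map_commutator, map_eq_bot_iff, ker_mk']
  rw [iff_map_eq_bot] at h1 h2 ⊢
  exact commutator_commutator_eq_bot_of_rotate h1 h2

theorem Subgroup.commutator_lowerCentralSeries_commutator_le (k : ℕ) :
    ⁅(⊤ : Subgroup G).lowerCentralSeries k, _root_.commutator G⁆ ≤
      (⊤ : Subgroup G).lowerCentralSeries (k + 2) := by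
  rw [commutator_comm, _root_.commutator]
  apply commutator_commutator_le_of_rotate
  · rw [commutator_comm ⊤]
    rfl
  · rfl

theorem QuotientGroup.commute_mk_of_commutatorElement_mem {K : Subgroup G} [K.Normal] {u v : G}
    (h : ⁅u, v⁆ ∈ K) : Commute (u : G ⧸ K) v := by
  rw [← commutatorElement_eq_one_iff_commute, ← mk'_apply, ← mk'_apply, ← map_commutatorElement,
    mk'_apply, eq_one_iff]
  exact h

theorem QuotientGroup.mk_mem_center_of_commutatorElement_mem {K : Subgroup G} [K.Normal] {a : G}
    (h : ∀ w, ⁅a, w⁆ ∈ K) :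
    (a : G ⧸ K) ∈ center (G ⧸ K) :=
  mem_center_iff.mpr fun z =>
    QuotientGroup.induction_on z fun w => (commute_mk_of_commutatorElement_mem (h w)).eq.symm

theorem commutatorElement_mul_mul_of_mem_center_of_commute {g a y b : G} (ha : a ∈ center G)
    (hb : Commute g b) : ⁅g * a, y * b⁆ = ⁅g, y⁆ := by
  rw [mem_center_iff] at ha
  calc ⁅g * a, y * b⁆ = g * (a * (y * b) * a⁻¹) * g⁻¹ * (y * b)⁻¹ := by
        simp only [commutatorElement_def, mul_inv_rev, mul_assoc]
    _ = g * y * (b * g⁻¹) * b⁻¹ * y⁻¹ := by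
        rw [← ha, mul_inv_cancel_right]
        group
    _ = ⁅g, y⁆ := by
        rw [← hb.inv_left.eq, commutatorElement_def]
        group

theorem mk_eq_mk_apply_of_mem_lowerCentralSeries (f : G →* G)
    (hf : ∀ x : G, (x : G ⧸ _root_.commutator G) = f x) :
    ∀ k, ∀ x ∈ (⊤ : Subgroup G).lowerCentralSeries k,
      (x : G ⧸ (⊤ : Subgroup G).lowerCentralSeries (k + 1)) = f x
  | 0, x, _ => hf x
  | k + 1, _, hx => by
    refine (commutator_le.mpr ?_ : (⊤ : Subgroup G).lowerCentralSeries (k + 1) ≤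
      (mk' ((⊤ : Subgroup G).lowerCentralSeries (k + 2))).eqLocus ((mk' _).comp f)) hx
    intro g hg y _
    -- Write `f g = g a` and `f y = y b`; modulo the target term `a` is central and `b` commutes
    -- with `g`, so `⁅f g, f y⁆ ≡ ⁅g, y⁆`.
    obtain ⟨a, ha, hga⟩ := (mk'_eq_mk' _).mp (mk_eq_mk_apply_of_mem_lowerCentralSeries f hf k g hg)
    obtain ⟨b, hb, hyb⟩ := (mk'_eq_mk' _).mp (hf y)
    have ha_center : (a : G ⧸ (⊤ : Subgroup G).lowerCentralSeries (k + 2)) ∈ center _ :=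
      mk_mem_center_of_commutatorElement_mem fun w => commutator_mem_commutator ha (mem_top w)
    have hgb : Commute (g : G ⧸ (⊤ : Subgroup G).lowerCentralSeries (k + 2)) b :=
      commute_mk_of_commutatorElement_mem <|
        commutator_lowerCentralSeries_commutator_le k (commutator_mem_commutator hg hb)
    show mk' _ ⁅g, y⁆ = mk' _ (f ⁅g, y⁆)
    simp only [map_commutatorElement, ← hga, ← hyb, map_mul]
    exact (commutatorElement_mul_mul_of_mem_center_of_commute ha_center hgb).symm

theorem injective_of_lowerCentralSeries_eq_bot {n : ℕ} {f : G →* G}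
    (hn : (⊤ : Subgroup G).lowerCentralSeries n = ⊥)
    (hf : ∀ x : G, (x : G ⧸ _root_.commutator G) = f x) : Function.Injective f := by
  rw [injective_iff_map_eq_one]
  intro x hx
  have mem_all : ∀ k, x ∈ (⊤ : Subgroup G).lowerCentralSeries k := by
    intro k
    induction k with
    | zero => exact mem_top x
    | succ k ih =>
      have := mk_eq_mk_apply_of_mem_lowerCentralSeries f hf k x ih
      rwa [hx, QuotientGroup.mk_one, eq_one_iff] at this
  simpa [hn] using mem_all n

theorem surjective_of_lowerCentralSeries_eq_bot {n : ℕ} {f : G →* G}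
    (hn : (⊤ : Subgroup G).lowerCentralSeries n = ⊥)
    (hf : ∀ x : G, (x : G ⧸ _root_.commutator G) = f x) : Function.Surjective f := by
  intro x
  have approx : ∀ k, ∃ y, (f y : G ⧸ (⊤ : Subgroup G).lowerCentralSeries k) = x := by
    intro k
    induction k with
    | zero => exact ⟨1, QuotientGroup.eq.mpr (mem_top _)⟩
    | succ k ih =>
      obtain ⟨y, hy⟩ := ih
      obtain ⟨z, hz, rfl⟩ := (mk'_eq_mk' _).mp hy
      refine ⟨y * z, ?_⟩
      rw [map_mul, QuotientGroup.mk_mul, QuotientGroup.mk_mul,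
        ← mk_eq_mk_apply_of_mem_lowerCentralSeries f hf k z hz]
  obtain ⟨y, hy⟩ := approx n
  obtain ⟨z, hz, rfl⟩ := (mk'_eq_mk' _).mp hy
  rw [hn, mem_bot] at hz
  exact ⟨y, by rw [hz, mul_one]⟩

end

theorem stmt_10_general {B : Type*} (c : ℕ)
    (N : Type*) [Group N] (π : FreeGroup B →* N) (hπ : Function.Surjective π)
    (hker : π.ker = (⊤ : Subgroup (FreeGroup B)).lowerCentralSeries (c - 1))
    (cb : B → N) (hcb : ∀ b : B, cb b ∈ commutator N) :
    ∃ φ : MulAut N, ∀ b : B, φ (π (FreeGroup.of b)) = π (FreeGroup.of b) * cb b := by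
  have hN := lowerCentralSeries_eq_bot_of_ker_eq hπ hker
  let f : FreeGroup B →* N := FreeGroup.lift fun b => π (.of b) * cb b
  let φ : N →* N := π.liftOfSurjective hπ ⟨f, hker ▸ lowerCentralSeries_le_ker f hN⟩
  have hφ (b : B) : φ (π (.of b)) = π (.of b) * cb b := by
    simp [φ, f]
  have hφ_mod_commutator : ∀ x : N, (x : N ⧸ _root_.commutator N) = φ x := by
    have : (mk' (_root_.commutator N)).comp π = ((mk' (_root_.commutator N)).comp φ).comp π :=
      FreeGroup.ext_hom _ _ fun b => by simp [hφ, (eq_one_iff _).mpr (hcb b)]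
    intro x
    obtain ⟨w, rfl⟩ := hπ x
    exact DFunLike.congr_fun this w
  exact ⟨MulEquiv.ofBijective φ ⟨injective_of_lowerCentralSeries_eq_bot hN hφ_mod_commutator,
    surjective_of_lowerCentralSeries_eq_bot hN hφ_mod_commutator⟩, hφ⟩

/-- Let `N = F/γ_c(F)` be the free nilpotent group of class `c - 1` on `B` (with
`γ_k G = lowerCentralSeries G (k-1)`, `c ≥ 2`). For any family `c_b ∈ γ₂(N)` `(b ∈ B)`,
the endomorphism determined by `b ↦ b · c_b` is an automorphism of `N`. -/
theorem stmt_10 {B : Type*} (c : ℕ) (hc : 2 ≤ c)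
    (N : Type*) [Group N] (π : FreeGroup B →* N) (hπ : Function.Surjective π)
    (hker : π.ker = (⊤ : Subgroup (FreeGroup B)).lowerCentralSeries (c - 1))
    (cb : B → N) (hcb : ∀ b : B, cb b ∈ commutator N) :
    ∃ φ : MulAut N, ∀ b : B, φ (π (FreeGroup.of b)) = π (FreeGroup.of b) * cb b :=
  stmt_10_general c N π hπ hker cb hcb
end

section
/- Let F be a relatively free algebra of infinite rank κ having the small index property. Then every proper normal subgroup of Aut(F) has index strictly greater than κ, and Aut(F) is a perfect group. -/
/-!
A normal subgroup of index `≤ κ` contains, by the small index property, the pointwise stabilizer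
of a small set, hence its normal closure, which is everything by the generation fact. For
perfectness, an element outside `[Γ, Γ]` is detected by a character of the abelianization with
values in `ℚ/ℤ`; its kernel is a proper normal subgroup of countable index, and `ℵ₀ ≤ κ`.
-/

theorem exists_normal_countable_quotient_notMem_of_notMem_commutator
    {G : Type*} [Group G] {g : G} (hg : g ∉ commutator G) :
    ∃ N : Subgroup G, N.Normal ∧ Countable (G ⧸ N) ∧ g ∉ N := by
  have hg' : Additive.ofMul (Abelianization.of g) ≠ 0 :=
    fun h ↦ hg <| (QuotientGroup.eq_one_iff g).mp h
  obtain ⟨c, hc⟩ := CharacterModule.exists_character_apply_ne_zero_of_ne_zero hg'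
  let f : G →* Multiplicative (AddCircle (1 : ℚ)) :=
    (AddMonoidHom.toMultiplicativeRight c).comp Abelianization.of
  have : Countable (Multiplicative (AddCircle (1 : ℚ))) := Quotient.countable
  refine ⟨f.ker, f.normal_ker, (QuotientGroup.kerLift_injective f).countable, fun hgf ↦ hc ?_⟩
  exact congrArg Multiplicative.toAdd (f.mem_ker.mp hgf)

theorem commutator_eq_top_of_forall_normal_countable_quotient {G : Type*} [Group G]
    (h : ∀ N : Subgroup G, N.Normal → Countable (G ⧸ N) → N = ⊤) : commutator G = ⊤ := by
  refine (Subgroup.eq_top_iff' _).mpr fun g ↦ by_contra fun hg ↦ ?_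
  obtain ⟨N, hN, hcount, hgN⟩ :=
    exists_normal_countable_quotient_notMem_of_notMem_commutator hg
  exact hgN (h N hN hcount ▸ Subgroup.mem_top g)

/-- Abstract form of Proposition "small index property ⟹ perfect": let `Γ` act (by
automorphisms) on a relatively free algebra `F` of infinite rank `κ`.  Assume the small
index property (`hsip`): every subgroup of index `≤ κ` contains the pointwise stabilizer of
a set of cardinality `< κ`; and the generation fact (`hgen`): `Γ` is generated by the
conjugates of any pointwise stabilizer of a set of cardinality `< κ`.  Then every proper
normal subgroup of `Γ` has index `> κ`, and `Γ` is perfect. -/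
theorem stmt_12 {Γ F : Type u} [Group Γ] [MulAction Γ F]
    (κ : Cardinal.{u}) (hκ : Cardinal.aleph0 ≤ κ)
    (hsip : ∀ S : Subgroup Γ, Cardinal.mk (Γ ⧸ S) ≤ κ →
      ∃ U : Set F, Cardinal.mk U < κ ∧ (⨅ u ∈ U, MulAction.stabilizer Γ u) ≤ S)
    (hgen : ∀ U : Set F, Cardinal.mk U < κ →
      Subgroup.normalClosure (↑(⨅ u ∈ U, MulAction.stabilizer Γ u) : Set Γ) = ⊤) :
    (∀ N : Subgroup Γ, N.Normal → Cardinal.mk (Γ ⧸ N) ≤ κ → N = ⊤) ∧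
    commutator Γ = ⊤ := by
  have hnormal : ∀ N : Subgroup Γ, N.Normal → Cardinal.mk (Γ ⧸ N) ≤ κ → N = ⊤ := by
    intro N hN hindex
    obtain ⟨U, hU, hle⟩ := hsip N hindex
    rw [← top_le_iff, ← hgen U hU]
    exact Subgroup.normalClosure_le_normal hle
  refine ⟨hnormal, commutator_eq_top_of_forall_normal_countable_quotient ?_⟩
  intro N hN hcount
  exact hnormal N hN (Cardinal.mk_le_aleph0.trans hκ)
end

section
/- Let F be a free abelian group with basis B of infinite cardinality. Let D ⊆ B with |D| < |B| and let σ ∈ Aut(F) fix D pointwise. Write E = B \ D. Then there exists a basis {e'_i} of the subgroup ⟨E⟩ and elements u_i ∈ ⟨D⟩ such that σ(e_i) = e'_i + u_i for every e_i ∈ E. -/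
/-!
An automorphism fixing `D` pointwise preserves `⟨D⟩`, hence induces an automorphism of
`F ⧸ ⟨D⟩`. Transporting it along `F ⧸ ⟨D⟩ ≃ ⟨E⟩` gives an automorphism of `⟨E⟩`, which sends
`e_i` to the `⟨E⟩`-component `e'_i` of `σ e_i`; so the `e'_i` form a basis of `⟨E⟩`, and
`u_i := σ e_i - e'_i` is the `⟨D⟩`-component.
-/

universe v

open Set Submodule

namespace Module.Basis

variable {ι κ R M : Type*} [Ring R] [AddCommGroup M] [Module R M]

theorem isCompl_span_range_inl_inr (b : Basis (ι ⊕ κ) R M) :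
    IsCompl (span R (range fun i => b (Sum.inl i))) (span R (range fun k => b (Sum.inr k))) := by
  have h := b.linearIndependent.isCompl_span_image b.span_eq isCompl_range_inl_range_inr
  rwa [← range_comp, ← range_comp] at h

variable {q : Submodule R M}

theorem linearIndependent_coe (w : Basis ι R q) : LinearIndependent R fun i => (w i : M) :=
  w.linearIndependent.map' q.subtype q.ker_subtype

theorem span_range_coe (w : Basis ι R q) : span R (range fun i => (w i : M)) = q := by
  rw [← Function.comp_def, range_comp, ← q.coe_subtype, span_image, w.span_eq, map_subtype_top]

end Module.Basis

namespace Submodule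

variable {R M : Type*} [Ring R] [AddCommGroup M] [Module R M] {p q : Submodule R M}

noncomputable def complEquivOfMapEq (h : IsCompl p q) (e : M ≃ₗ[R] M) (he : p.map (e : M →ₗ[R] M) = p) :
    q ≃ₗ[R] q :=
  (quotientEquivOfIsCompl p q h).symm ≪≫ₗ Quotient.equiv p p e he ≪≫ₗ
    quotientEquivOfIsCompl p q h

theorem projection_add_complEquivOfMapEq (h : IsCompl p q) (e : M ≃ₗ[R] M)
    (he : p.map (e : M →ₗ[R] M) = p) (x : q) :
    p.projection q h (e x) + complEquivOfMapEq h e he x = e x :=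
  projection_add_projection_eq_self h (e x)

end Submodule

theorem stmt_15_general {F : Type*} {D I : Type v} [AddCommGroup F] (b : Module.Basis (D ⊕ I) ℤ F)
    (σ : AddAut F) (hσ : ∀ d : D, σ (b (Sum.inl d)) = b (Sum.inl d)) :
    ∃ (e' : I → F) (u : I → F),
      LinearIndependent ℤ e' ∧
      Submodule.span ℤ (Set.range e') =
        Submodule.span ℤ (Set.range fun i : I => b (Sum.inr i)) ∧
      (∀ i : I, u i ∈ Submodule.span ℤ (Set.range fun d : D => b (Sum.inl d))) ∧
      ∀ i : I, σ (b (Sum.inr i)) = e' i + u i := by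
  let τ : F ≃ₗ[ℤ] F := (σ : F ≃+ F).toIntLinearEquiv
  have hpq := b.isCompl_span_range_inl_inr
  have hτ : (span ℤ (range fun d => b (Sum.inl d))).map (τ : F →ₗ[ℤ] F) =
      span ℤ (range fun d => b (Sum.inl d)) := by
    rw [map_span, ← range_comp]
    exact congrArg (fun v => span ℤ (range v)) (funext hσ)
  let w := (Module.Basis.span (b.linearIndependent.comp Sum.inr Sum.inr_injective)).map
    (complEquivOfMapEq hpq τ hτ)
  refine ⟨fun i => w i, fun i => projection _ _ hpq (σ (b (Sum.inr i))),
    w.linearIndependent_coe, w.span_range_coe, fun i => projection_apply_mem _ _, fun i => ?_⟩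
  dsimp only [w]
  rw [add_comm, Module.Basis.map_apply, Module.Basis.span_apply]
  exact (projection_add_complEquivOfMapEq hpq τ hτ ⟨_, subset_span ⟨i, rfl⟩⟩).symm

/-- Let `F` be free abelian with basis `b` indexed by `D ⊕ I` of infinite cardinality,
with `|D| < |D ⊕ I|`, and let `σ ∈ Aut F` fix the `D`-part pointwise. Then there are a
basis `e'` of the subgroup generated by the `E = I`-part (i.e. a linearly independent family
spanning it) and elements `u i` of the subgroup generated by `D`
with `σ(e_i) = e'_i + u_i` for all `i`. -/
theorem stmt_15 {F : Type*} {D I : Type v} [AddCommGroup F] (b : Module.Basis (D ⊕ I) ℤ F)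
    (hinf : Cardinal.aleph0 ≤ Cardinal.mk (D ⊕ I))
    (hD : Cardinal.mk D < Cardinal.mk (D ⊕ I))
    (σ : AddAut F) (hσ : ∀ d : D, σ (b (Sum.inl d)) = b (Sum.inl d)) :
    ∃ (e' : I → F) (u : I → F),
      LinearIndependent ℤ e' ∧
      Submodule.span ℤ (Set.range e') =
        Submodule.span ℤ (Set.range fun i : I => b (Sum.inr i)) ∧
      (∀ i : I, u i ∈ Submodule.span ℤ (Set.range fun d : D => b (Sum.inl d))) ∧
      ∀ i : I, σ (b (Sum.inr i)) = e' i + u i :=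
  stmt_15_general b σ hσ
end

section
/- Let V be a vector space of infinite dimension κ over a division ring, with basis B, and let D ⊆ B with |D| < κ. Then the pointwise stabilizer of D in GL(V) is generated by the B-moietous automorphisms fixing D pointwise. -/
/-!
If an automorphism `ρ` fixes `b i` for all `i ∈ D ∪ Y`, where `Y` is disjoint from `D` and
`#Y = κ`, halve `Y` into `C ⊔ W`: then `ρ` is the identity on `p = span b(T)`, `T = D ∪ W`,
and factors as `ρ' u` with `u - 1` mapping into `p` and `ρ' - 1` mapping into `q = span b(Tᶜ)`;
both factors are moietous, with fixed halves `C` and `T`.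

A basis permutation fixing `D` either fixes `κ` points outside `D`, or moves a set `M` of size
`κ` off itself (Zorn); swapping half of `M` with its image writes it as a product of two
permutations each fixing `κ` points.

For general `σ`, halve `Dᶜ = A ⊔ C` and choose `S` with `span b(S)` complementary to
`σ (span b(Cᶜ))`. Comparing dimensions, `#S = #C` and `#(Dᶜ \ S) = #A`, so some permutation
`τ` fixing `D` maps `C` onto `S`. The automorphism `ρ` equal to `σ` on `b(Cᶜ)` and to `τ` on
`b(C)` then satisfies `σ = τ (τ⁻¹ ρ) (ρ⁻¹ σ)`, where `τ⁻¹ ρ` fixes `C` and `ρ⁻¹ σ` fixes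
`A`.
-/

open Cardinal Set Submodule

namespace Cardinal

variable {α : Type*}

theorem mk_eq_of_subset_of_mk_eq {s t : Set α} (hst : s ⊆ t) (hs : #s = #α) : #t = #α :=
  le_antisymm (mk_set_le t) (hs ▸ mk_le_mk_of_subset hst)

theorem mk_sdiff_eq_of_mk_lt (hα : ℵ₀ ≤ #α) {s t : Set α} (hs : #s = #α) (ht : #t < #α) :
    #↥(s \ t) = #α :=
  le_antisymm (mk_set_le _) <| not_lt.1 fun h =>
    ((le_mk_sdiff_add_mk s t).trans_lt (add_lt_of_lt hα h ht)).ne hs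

theorem exists_subset_mk_eq_mk_sdiff_eq {T : Set α} (hT : ℵ₀ ≤ #T) :
    ∃ T₁ ⊆ T, #T₁ = #T ∧ #↥(T \ T₁) = #T := by
  obtain ⟨e⟩ : Nonempty (↥T ⊕ ↥T ≃ ↥T) :=
    Cardinal.eq.1 (by rw [mk_sum, lift_id, add_eq_self hT])
  have mk_half (f : ↥T → ↥T ⊕ ↥T) (hf : Function.Injective f) :
      #((↑) '' range (e ∘ f) : Set α) = #T := by
    rw [mk_image_eq Subtype.val_injective, mk_range_eq _ (e.injective.comp hf)]
  refine ⟨(↑) '' range (e ∘ Sum.inl), Subtype.coe_image_subset _ _,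
    mk_half _ Sum.inl_injective, le_antisymm (mk_le_mk_of_subset sdiff_subset) ?_⟩
  refine (mk_half _ Sum.inr_injective).symm.le.trans (mk_le_mk_of_subset ?_)
  rintro _ ⟨_, ⟨a, rfl⟩, rfl⟩
  refine ⟨(e (.inr a)).2, ?_⟩
  rintro ⟨_, ⟨a', rfl⟩, h⟩
  exact Sum.inl_ne_inr (e.injective (Subtype.ext h))

end Cardinal

namespace Equiv.Perm

variable {α : Type*}

theorem exists_preimage_eq_of_mk_eq {s t : Set α} (h : #s = #t) (hc : #↥sᶜ = #↥tᶜ) :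
    ∃ π : Perm α, π ⁻¹' t = s := by
  classical
  obtain ⟨e⟩ := Cardinal.eq.1 h
  obtain ⟨f⟩ : Nonempty ({x // x ∉ s} ≃ {x // x ∉ t}) := Cardinal.eq.1 hc
  refine ⟨Equiv.subtypeCongr e f, Set.ext fun x => ?_⟩
  by_cases hx : x ∈ s
  · simp [Equiv.subtypeCongr, hx]
  · simpa [Equiv.subtypeCongr, hx] using (f ⟨x, hx⟩).2

theorem exists_fixing_image_eq_of_mk_eq {D s t : Set α} (hs : s ⊆ Dᶜ) (ht : t ⊆ Dᶜ)
    (h : #s = #t) (hc : #↥(Dᶜ \ s) = #↥(Dᶜ \ t)) :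
    ∃ π : Perm α, (∀ x ∈ D, π x = x) ∧ π '' s = t := by
  classical
  have mk_preimage {u : Set α} (hu : u ⊆ Dᶜ) : #((↑) ⁻¹' u : Set ↥Dᶜ) = #u :=
    mk_preimage_of_injective_of_subset_range _ _ Subtype.val_injective
      (by rwa [Subtype.range_coe])
  have compl_preimage (u : Set α) : ((↑) ⁻¹' u : Set ↥Dᶜ)ᶜ = (↑) ⁻¹' (Dᶜ \ u) := by
    ext; simp
  obtain ⟨π, hπ⟩ := exists_preimage_eq_of_mk_eq (s := ((↑) ⁻¹' s : Set ↥Dᶜ))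
    (t := (↑) ⁻¹' t) (by rw [mk_preimage hs, mk_preimage ht, h])
    (by rw [compl_preimage, compl_preimage, mk_preimage sdiff_subset, mk_preimage sdiff_subset,
      hc])
  refine ⟨ofSubtype π, fun x hx => ofSubtype_apply_of_not_mem π (not_not.2 hx), ?_⟩
  ext y
  constructor
  · rintro ⟨x, hx, rfl⟩
    have : (⟨x, hs hx⟩ : ↥Dᶜ) ∈ π ⁻¹' ((↑) ⁻¹' t) := hπ ▸ hx
    rwa [ofSubtype_apply_of_mem π (hs hx)]
  · intro hy
    have : π.symm ⟨y, ht hy⟩ ∈ π ⁻¹' ((↑) ⁻¹' t) := by simpa using hy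
    exact ⟨_, hπ ▸ this, by simp⟩

theorem exists_subset_mk_eq_disjoint_image (π : Perm α) (h : ℵ₀ ≤ #{x | π x ≠ x}) :
    ∃ M ⊆ {x | π x ≠ x}, #M = #{x | π x ≠ x} ∧ _root_.Disjoint (π '' M) M := by
  obtain ⟨M, -, hmax⟩ :=
    zorn_subset_nonempty {M | M ⊆ {x | π x ≠ x} ∧ _root_.Disjoint (π '' M) M}
    (fun c hc hchain _ => ⟨⋃₀ c, ⟨sUnion_subset fun M hM => (hc hM).1, by
      rw [Set.disjoint_left]
      rintro _ ⟨m, ⟨s₁, hs₁, hm⟩, rfl⟩ ⟨s₂, hs₂, hx⟩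
      rcases hchain.total hs₁ hs₂ with h | h
      · exact Set.disjoint_left.1 (hc hs₂).2 ⟨m, h hm, rfl⟩ hx
      · exact Set.disjoint_left.1 (hc hs₁).2 ⟨m, hm, rfl⟩ (h hx)⟩,
      fun _ => subset_sUnion_of_mem⟩)
    ∅ ⟨empty_subset _, by simp⟩
  refine ⟨M, hmax.prop.1, le_antisymm (mk_le_mk_of_subset hmax.prop.1) (not_lt.1 fun hlt => ?_),
    hmax.prop.2⟩
  have hsmall : #↥(M ∪ π '' M ∪ π.symm '' M) < #{x | π x ≠ x} :=
    ((mk_union_le _ _).trans (add_le_add (mk_union_le _ _) le_rfl)).trans_lt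
      (add_lt_of_lt h (add_lt_of_lt h hlt (mk_image_le.trans_lt hlt)) (mk_image_le.trans_lt hlt))
  obtain ⟨x, hx, hxM⟩ := not_subset.1 fun hsub => (mk_le_mk_of_subset hsub).not_gt hsmall
  have hins : insert x M ∈ {M | M ⊆ {x | π x ≠ x} ∧ _root_.Disjoint (π '' M) M} := by
    refine ⟨insert_subset hx hmax.prop.1, ?_⟩
    rw [image_insert_eq, disjoint_insert_left, disjoint_insert_right, mem_insert_iff]
    refine ⟨?_, fun h => hxM (Or.inl (Or.inr h)), hmax.prop.2⟩
    rintro (h | h)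
    · exact hx h
    · exact hxM (Or.inr ⟨π x, h, π.symm_apply_apply x⟩)
  exact hxM (Or.inl (Or.inl (hmax.2 hins (subset_insert x M) (mem_insert x M))))

theorem exists_leftInvOn_of_disjoint_image (π : Perm α) {M : Set α}
    (hM : _root_.Disjoint (π '' M) M) :
    ∃ h : Perm α, LeftInvOn h π M ∧ ∀ x ∉ M ∪ π '' M, h x = x := by
  classical
  let f : α → α := fun x => if x ∈ M then π x else if π.symm x ∈ M then π.symm x else x
  have hπM : ∀ x ∈ M, π x ∉ M := fun x hx => Set.disjoint_left.1 hM (mem_image_of_mem π hx)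
  have hf : Function.Involutive f := by
    intro x
    by_cases hx : x ∈ M
    · simp [f, hx, hπM x hx]
    · by_cases hx' : π.symm x ∈ M <;> simp [f, hx, hx']
  refine ⟨hf.toPerm f, fun x hx => ?_, fun x hx => ?_⟩
  · simp [f, hx, hπM x hx]
  · have hx' : π.symm x ∉ M := fun h => hx (Or.inr ⟨_, h, π.apply_symm_apply x⟩)
    have hxM : x ∉ M := fun h => hx (Or.inl h)
    simp [f, hxM, hx']

end Equiv.Perm

section LinearAlgebra

variable {R M : Type*} [Ring R] [AddCommGroup M] [Module R M]

theorem Submodule.map_eq_self_of_sub_mem (σ : M ≃ₗ[R] M) {q : Submodule R M}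
    (h : ∀ v, σ v - v ∈ q) : q.map (σ : M →ₗ[R] M) = q := by
  refine le_antisymm ?_ fun v hv => ⟨σ.symm v, ?_, σ.apply_symm_apply v⟩
  · rintro _ ⟨v, hv, rfl⟩
    simpa using add_mem (h v) hv
  · simpa using sub_mem hv (h (σ.symm v))

theorem LinearEquiv.exists_eq_mul_of_isCompl {p q : Submodule R M} (h : IsCompl p q)
    (ρ : M ≃ₗ[R] M) (hρ : ∀ v ∈ p, ρ v = v) :
    ∃ ρ' u : M ≃ₗ[R] M, ρ = ρ' * u ∧ (∀ v, ρ' v - v ∈ q) ∧ (∀ v, u v - v ∈ p) ∧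
      ∀ v, ρ v = v → ρ' v = v ∧ u v = v := by
  -- `u = 1 + N` is unipotent as `N` vanishes on `p ⊇ range N`; `ρ u⁻¹ - 1` is `ρ - 1` followed
  -- by the projection onto `q`.
  set N : M →ₗ[R] M := p.projection q h ∘ₗ ((ρ : M →ₗ[R] M) - LinearMap.id)
  have hNp : ∀ v, N v ∈ p := fun v => projection_apply_mem h _
  have hNN : ∀ v, N (N v) = 0 := fun v => by
    show p.projection q h (ρ (N v) - N v) = 0
    rw [hρ _ (hNp v), sub_self, map_zero]
  let u : M ≃ₗ[R] M := LinearEquiv.ofLinearMap (LinearMap.id + N) (LinearMap.id - N)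
    (by ext v; simp [hNN]) (by ext v; simp [hNN])
  refine ⟨ρ * u⁻¹, u, (inv_mul_cancel_right ρ u).symm, fun v => ?_, fun v => by simp [u, hNp],
    fun v hv => ?_⟩
  · have : (ρ * u⁻¹) v - v = (ρ v - v) - p.projection q h (ρ v - v) := by
      show ρ (v - N v) - v = _
      rw [map_sub, hρ _ (hNp v)]
      simp only [N, LinearMap.comp_apply, LinearMap.sub_apply, LinearEquiv.coe_coe,
        LinearMap.id_apply]
      abel
    rw [this]
    exact sub_projection_mem h _
  · have hN : N v = 0 := by simp [N, hv]
    exact ⟨show ρ (v - N v) = v by rw [hN, sub_zero, hv], by simp [u, hN]⟩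

theorem LinearEquiv.exists_extend_of_isCompl {p q p' q' : Submodule R M} (h : IsCompl p q)
    (h' : IsCompl p' q') (e₁ : p ≃ₗ[R] p') (e₂ : q ≃ₗ[R] q') :
    ∃ ρ : M ≃ₗ[R] M, (∀ x : p, ρ x = e₁ x) ∧ ∀ x : q, ρ x = e₂ x :=
  ⟨(prodEquivOfIsCompl p q h).symm ≪≫ₗ e₁.prodCongr e₂ ≪≫ₗ prodEquivOfIsCompl p' q' h',
    fun x => by simp, fun x => by simp⟩

end LinearAlgebra

namespace Module.Basis

theorem isCompl_span_image_compl {ι R M : Type*} [Semiring R] [AddCommMonoid M] [Module R M]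
    (b : Basis ι R M) (s : Set ι) : IsCompl (span R (b '' s)) (span R (b '' sᶜ)) :=
  b.linearIndependent.isCompl_span_image b.span_eq isCompl_compl

universe u v w

variable {ι : Type w} {K : Type u} {V : Type v} [DivisionRing K] [AddCommGroup V] [Module K V]
  (b : Basis ι K V)

theorem exists_isCompl_span_image (U : Submodule K V) :
    ∃ S : Set ι, IsCompl U (span K (b '' S)) := by
  obtain ⟨S, -, -, hspan, hli⟩ := exists_linearIndepOn_extension (v := U.mkQ ∘ b)
    (linearIndepOn_empty K _) (empty_subset univ)
  refine ⟨S, ?_, ?_⟩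
  · have := Submodule.range_ker_disjoint (f := U.mkQ) (v := b ∘ ((↑) : S → ι)) hli
    rwa [ker_mkQ, range_comp, Subtype.range_coe, disjoint_comm] at this
  · rw [codisjoint_iff, ← comap_map_mkQ, eq_top_iff, ← b.span_eq, span_le]
    rintro _ ⟨i, rfl⟩
    rw [SetLike.mem_coe, mem_comap, map_span, ← image_comp]
    exact hspan (mem_image_of_mem _ (mem_univ i))

theorem mk_eq_of_linearEquiv {s t : Set ι} (e : span K (b '' s) ≃ₗ[K] span K (b '' t)) :
    #s = #t := by
  have lift_rank (u : Set ι) : lift.{w} (Module.rank K (span K (b '' u))) = lift.{v} #u := by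
    rw [rank_span_set (b.linearIndependent.linearIndepOn_id.mono (image_subset_range b u)),
      mk_image_eq_lift b u b.injective]
  rw [← lift_inj, ← lift_rank, ← lift_rank, e.rank_eq]

theorem mk_eq_of_isCompl_map (σ : V ≃ₗ[K] V) {s t : Set ι}
    (h : IsCompl ((span K (b '' s)).map (σ : V →ₗ[K] V)) (span K (b '' t))) :
    #t = #↥sᶜ ∧ #↥tᶜ = #s := by
  have compl_equiv {p q q' : Submodule K V} (h : IsCompl p q) (h' : IsCompl p q') :
      q ≃ₗ[K] q' :=
    (quotientEquivOfIsCompl p q h).symm.trans (quotientEquivOfIsCompl p q' h')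
  have hσ := (orderIsoMapComap σ).isCompl (b.isCompl_span_image_compl s)
  exact ⟨b.mk_eq_of_linearEquiv ((compl_equiv h hσ).trans (σ.submoduleMap _).symm),
    b.mk_eq_of_linearEquiv
      ((compl_equiv (b.isCompl_span_image_compl t) h.symm).trans (σ.submoduleMap _).symm)⟩

theorem equiv_perm_mul (σ τ : Equiv.Perm ι) :
    b.equiv b (σ * τ) = (b.equiv b σ * b.equiv b τ : V ≃ₗ[K] V) := by
  rw [Equiv.Perm.mul_def, ← b.equiv_trans b b]
  rfl

variable (D : Set ι)

def moietousFixing : Set (V ≃ₗ[K] V) :=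
  {σ : V ≃ₗ[K] V | (∀ i ∈ D, σ (b i) = b i) ∧
    ∃ B₁ : Set ι, #B₁ = #↥B₁ᶜ ∧ (∀ i ∈ B₁, σ (b i) = b i) ∧
      (span K (b '' B₁ᶜ)).map (σ : V →ₗ[K] V) = span K (b '' B₁ᶜ)}

variable {b D} in
theorem mem_moietousFixing_of_sub_mem {σ : V ≃ₗ[K] V} {B₁ : Set ι}
    (hD : ∀ i ∈ D, σ (b i) = b i) (hB₁ : #B₁ = #↥B₁ᶜ) (hfix : ∀ i ∈ B₁, σ (b i) = b i)
    (hsub : ∀ v, σ v - v ∈ span K (b '' B₁ᶜ)) : σ ∈ b.moietousFixing D :=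
  ⟨hD, B₁, hB₁, hfix, map_eq_self_of_sub_mem σ hsub⟩

theorem mem_closure_moietousFixing_of_fixes (hinf : ℵ₀ ≤ #ι) {Y : Set ι} (hY : #Y = #ι)
    (hYD : Disjoint Y D) {ρ : V ≃ₗ[K] V} (hρ : ∀ i ∈ D ∪ Y, ρ (b i) = b i) :
    ρ ∈ Subgroup.closure (b.moietousFixing D) := by
  obtain ⟨C, hCY, hC, hW⟩ := exists_subset_mk_eq_mk_sdiff_eq (hY ▸ hinf : ℵ₀ ≤ #Y)
  rw [hY] at hC hW
  set T := D ∪ (Y \ C)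
  have hTC : T ⊆ Cᶜ := union_subset (fun i hi hiC => Set.disjoint_left.1 hYD (hCY hiC) hi)
    fun i hi => hi.2
  have hTY : T ⊆ D ∪ Y := union_subset_union_right D sdiff_subset
  have hρT : ∀ v ∈ span K (b '' T), ρ v = v := fun v hv =>
    LinearMap.eqOn_span' (f := (ρ : V →ₗ[K] V)) (g := LinearMap.id)
      (by rintro _ ⟨i, hi, rfl⟩; exact hρ i (hTY hi)) hv
  obtain ⟨ρ', u, hρu, hρ', hu, hfix⟩ :=
    LinearEquiv.exists_eq_mul_of_isCompl (b.isCompl_span_image_compl T) ρ hρT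
  have hfixes (i : ι) (hi : i ∈ D ∪ Y) := hfix _ (hρ i hi)
  rw [hρu]
  refine mul_mem (Subgroup.subset_closure ?_) (Subgroup.subset_closure ?_)
  · refine mem_moietousFixing_of_sub_mem (B₁ := T) (fun i hi => (hfixes i (.inl hi)).1) ?_
      (fun i hi => (hfixes i (hTY hi)).1) hρ'
    rw [mk_eq_of_subset_of_mk_eq subset_union_right hW,
      mk_eq_of_subset_of_mk_eq (subset_compl_comm.1 hTC) hC]
  · refine mem_moietousFixing_of_sub_mem (B₁ := C) (fun i hi => (hfixes i (.inl hi)).2) ?_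
      (fun i hi => (hfixes i (.inr (hCY hi))).2)
      fun v => span_mono (image_mono hTC) (hu v)
    rw [hC, mk_eq_of_subset_of_mk_eq (subset_union_right.trans hTC) hW]

theorem equiv_perm_mem_closure_moietousFixing (hinf : ℵ₀ ≤ #ι) (hD : #D < #ι)
    (π : Equiv.Perm ι) (hπ : ∀ i ∈ D, π i = i) :
    b.equiv b π ∈ Subgroup.closure (b.moietousFixing D) := by
  have of_fixes {π' : Equiv.Perm ι} {Y : Set ι} (hY : #Y = #ι) (hYD : Disjoint Y D)
      (h : ∀ i ∈ D ∪ Y, π' i = i) : b.equiv b π' ∈ Subgroup.closure (b.moietousFixing D) :=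
    b.mem_closure_moietousFixing_of_fixes D hinf hY hYD fun i hi => by rw [equiv_apply, h i hi]
  have hsuppD : ∀ i ∈ {i | π i ≠ i}, i ∉ D := fun i hi hiD => hi (hπ i hiD)
  rcases (mk_set_le {i | π i ≠ i}).lt_or_eq with hs | hs
  · have : Infinite ι := infinite_iff.2 hinf
    refine of_fixes (mk_sdiff_eq_of_mk_lt hinf (mk_compl_of_infinite _ hs) hD)
      disjoint_sdiff_left ?_
    rintro i (hi | ⟨hi, -⟩)
    exacts [hπ i hi, not_not.1 hi]
  obtain ⟨M₀, hM₀, hM₀κ, hdisj⟩ := π.exists_subset_mk_eq_disjoint_image (hs ▸ hinf)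
  rw [hs] at hM₀κ
  obtain ⟨M, hMM₀, hM, hM'⟩ := exists_subset_mk_eq_mk_sdiff_eq (hM₀κ ▸ hinf : ℵ₀ ≤ #M₀)
  rw [hM₀κ] at hM hM'
  obtain ⟨h, hhπ, hh⟩ := π.exists_leftInvOn_of_disjoint_image
    (disjoint_of_subset (image_mono hMM₀) hMM₀ hdisj)
  have hhD : ∀ i ∈ D, h i = i := by
    refine fun i hi => hh i ?_
    rintro (hiM | ⟨m, hm, rfl⟩)
    · exact hsuppD i (hM₀ (hMM₀ hiM)) hi
    · exact hM₀ (hMM₀ hm) (π.injective (hπ _ hi))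
  have hM₀D : Disjoint M₀ D := Set.disjoint_left.2 fun i hi => hsuppD i (hM₀ hi)
  rw [show π = h⁻¹ * (h * π) by group, equiv_perm_mul]
  refine mul_mem (of_fixes hM' (disjoint_of_subset_left sdiff_subset hM₀D) ?_)
    (of_fixes hM (disjoint_of_subset_left hMM₀ hM₀D) ?_)
  · rintro i (hi | ⟨hiM₀, hiM⟩) <;> rw [Equiv.Perm.inv_eq_iff_eq]
    · exact (hhD i hi).symm
    · refine (hh i ?_).symm
      rintro (hiM' | ⟨m, hm, rfl⟩)
      · exact hiM hiM'
      · exact Set.disjoint_left.1 hdisj ⟨m, hMM₀ hm, rfl⟩ hiM₀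
  · rintro i (hi | hi)
    · rw [Equiv.Perm.mul_apply, hπ i hi, hhD i hi]
    · exact hhπ hi

theorem mem_closure_moietousFixing (hinf : ℵ₀ ≤ #ι) (hD : #D < #ι) {σ : V ≃ₗ[K] V}
    (hσ : ∀ i ∈ D, σ (b i) = b i) : σ ∈ Subgroup.closure (b.moietousFixing D) := by
  have : Infinite ι := infinite_iff.2 hinf
  have hDc : #↥Dᶜ = #ι := mk_compl_of_infinite D hD
  obtain ⟨C, hCD, hC, hA⟩ := exists_subset_mk_eq_mk_sdiff_eq (hDc ▸ hinf : ℵ₀ ≤ #↥Dᶜ)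
  rw [hDc] at hC hA
  obtain ⟨S, hS⟩ := b.exists_isCompl_span_image ((span K (b '' Cᶜ)).map (σ : V →ₗ[K] V))
  obtain ⟨hSC, hScCc⟩ := b.mk_eq_of_isCompl_map σ hS
  rw [compl_compl] at hSC
  have hSD : S ⊆ Dᶜ := fun i hiS hiD => b.ne_zero i <| disjoint_iff_inf_le.1 hS.disjoint
    ⟨⟨b i, subset_span ⟨i, fun hiC => hCD hiC hiD, rfl⟩, hσ i hiD⟩,
      subset_span ⟨i, hiS, rfl⟩⟩
  have hSc : #↥(Dᶜ \ S) = #ι := by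
    rw [show Dᶜ \ S = Sᶜ \ D by ext; simp [and_comm]]
    refine mk_sdiff_eq_of_mk_lt hinf ?_ hD
    rw [hScCc, mk_eq_of_subset_of_mk_eq (t := Cᶜ) (fun i hi => hi.2) hA]
  obtain ⟨τ, hτD, hτC⟩ :=
    Equiv.Perm.exists_fixing_image_eq_of_mk_eq hCD hSD hSC.symm (hA.trans hSc.symm)
  have hτ : (span K (b '' C)).map (b.equiv b τ : V →ₗ[K] V) = span K (b '' S) := by
    rw [map_span, ← hτC, image_image, image_image]
    simp
  obtain ⟨ρ, hρσ, hρτ⟩ := LinearEquiv.exists_extend_of_isCompl (b.isCompl_span_image_compl C).symm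
    hS (σ.submoduleMap _) (((b.equiv b τ).submoduleMap _).trans (LinearEquiv.ofEq _ _ hτ))
  have hρσ' : ∀ i ∉ C, ρ (b i) = σ (b i) := fun i hi =>
    hρσ ⟨b i, subset_span ⟨i, hi, rfl⟩⟩
  have hρτ' : ∀ i ∈ C, ρ (b i) = b (τ i) := fun i hi =>
    (hρτ ⟨b i, subset_span ⟨i, hi, rfl⟩⟩).trans (by simp)
  rw [show σ = b.equiv b τ * ((b.equiv b τ)⁻¹ * ρ) * (ρ⁻¹ * σ) by group]
  refine mul_mem (mul_mem (b.equiv_perm_mem_closure_moietousFixing D hinf hD τ hτD) ?_) ?_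
  · refine b.mem_closure_moietousFixing_of_fixes D hinf hC
      (subset_compl_iff_disjoint_right.1 hCD) fun i hi => ?_
    show (b.equiv b τ).symm (ρ (b i)) = b i
    rw [LinearEquiv.symm_apply_eq, equiv_apply]
    rcases hi with hi | hi
    · rw [hρσ' i fun hiC => hCD hiC hi, hσ i hi, hτD i hi]
    · exact hρτ' i hi
  · refine b.mem_closure_moietousFixing_of_fixes D hinf hA
      (Set.disjoint_left.2 fun i hi => hi.1) fun i hi => ?_
    show ρ.symm (σ (b i)) = b i
    rw [LinearEquiv.symm_apply_eq, hρσ' i]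
    rintro hiC
    rcases hi with hi | hi
    exacts [hCD hiC hi, hi.2 hiC]

theorem closure_moietousFixing_le_fixingSubgroup :
    Subgroup.closure (b.moietousFixing D) ≤ fixingSubgroup (V ≃ₗ[K] V) (b '' D) :=
  (Subgroup.closure_le _).2 fun _ hσ => (mem_fixingSubgroup_iff _).2 <| by
    rintro _ ⟨i, hi, rfl⟩
    exact hσ.1 i hi

end Module.Basis

/-- Let `V` be a vector space of infinite dimension `κ = |ι|` over a division ring, with
basis `b`, and `D ⊆ ι` with `|D| < κ`. Then the pointwise stabilizer of `D` in `GL(V)` is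
generated by the `B`-moietous automorphisms fixing `D` pointwise. -/
theorem stmt_16 {K V ι : Type*} [DivisionRing K] [AddCommGroup V] [Module K V]
    (b : Module.Basis ι K V) (hinf : Cardinal.aleph0 ≤ Cardinal.mk ι)
    (D : Set ι) (hD : Cardinal.mk D < Cardinal.mk ι) :
    {σ : V ≃ₗ[K] V | ∀ i ∈ D, σ (b i) = b i} =
      ↑(Subgroup.closure {σ : V ≃ₗ[K] V | (∀ i ∈ D, σ (b i) = b i) ∧
        ∃ B₁ : Set ι, Cardinal.mk B₁ = Cardinal.mk ↥(B₁ᶜ) ∧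
          (∀ i ∈ B₁, σ (b i) = b i) ∧
          (Submodule.span K (b '' B₁ᶜ)).map (σ : V →ₗ[K] V) =
            Submodule.span K (b '' B₁ᶜ)}) := by
  ext σ
  refine ⟨b.mem_closure_moietousFixing D hinf hD, fun hσ i hi => ?_⟩
  exact (mem_fixingSubgroup_iff _).1 (b.closure_moietousFixing_le_fixingSubgroup D hσ) _
    (mem_image_of_mem b hi)
end
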